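/- Suppose Ω satisfies Condition (*). In the polynomial ring ℤ[u_1,…,u_{k+2}], set ρ_{abc} = ε^a_b·u_a·u_b + ε^b_c·u_b·u_c + ε^c_a·u_c·u_a for distinct a,b,c, and Or_{abc} = ε^a_b·ε^b_c·ε^c_a. Then for all distinct p,q,r,s ∈ {1,…,k+2}: Or_{pqr}·(ε^q_s·ε^r_s·u_p·ρ_{qrs} + ε^r_s·ε^p_s·u_q·ρ_{rps} + ε^p_s·ε^q_s·u_r·ρ_{pqs}) = −u_p·u_q·u_r. -/

import Mathlib

open Finset

/-- Determinant of the submatrix of `Ω` obtained by deleting the rows in `s`. -/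
noncomputable def minorDet (k : ℕ) (Ω : Matrix (Fin (k + 2)) (Fin k) ℤ)
    (s : Finset (Fin (k + 2))) : ℤ :=
  if h : sᶜ.card = k then (Ω.submatrix (sᶜ.orderEmbOfFin h) id).det else 0

/-- `Δ_{pq}`: determinant of `Ω` with rows `p` and `q` deleted. -/
noncomputable def Delta (k : ℕ) (Ω : Matrix (Fin (k + 2)) (Fin k) ℤ) (p q : Fin (k + 2)) : ℤ :=
  minorDet k Ω {p, q}

theorem Delta_symm (k : ℕ) (Ω : Matrix (Fin (k + 2)) (Fin k) ℤ) (p q : Fin (k + 2)) :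
    Delta k Ω p q = Delta k Ω q p := by
  unfold Delta; rw [Finset.pair_comm]

/-- Condition (*). -/
def CondStar (k : ℕ) (Ω : Matrix (Fin (k + 2)) (Fin k) ℤ) : Prop :=
  (∀ p q : Fin (k + 2), p ≠ q → Delta k Ω p q ≠ 0) ∧
  (∀ p : Fin (k + 2), (Finset.univ.erase p).gcd (fun q => (Delta k Ω p q).natAbs) = 1)

/-- The sign `ε^p_q`. -/
noncomputable def eps (k : ℕ) (Ω : Matrix (Fin (k + 2)) (Fin k) ℤ) (p q : Fin (k + 2)) : ℤ :=
  (-1) ^ ((p : ℕ) + (q : ℕ)) * Int.sign ((p : ℤ) - (q : ℤ)) * Int.sign (Delta k Ω p q)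

/-- `v_p = Σ_i Ω_{pi} x_i`. -/
noncomputable def vP (k : ℕ) (Ω : Matrix (Fin (k + 2)) (Fin k) ℤ) (p : Fin (k + 2)) :
    MvPolynomial (Fin k) ℤ :=
  ∑ i : Fin k, MvPolynomial.C (Ω p i) * MvPolynomial.X i

/-- `ρ_{abc} = ε^a_b u_a u_b + ε^b_c u_b u_c + ε^c_a u_c u_a` in `ℤ[u_1,…,u_{k+2}]`. -/
noncomputable def rho (k : ℕ) (Ω : Matrix (Fin (k + 2)) (Fin k) ℤ) (a b c : Fin (k + 2)) :
    MvPolynomial (Fin (k + 2)) ℤ :=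
  MvPolynomial.C (eps k Ω a b) * MvPolynomial.X a * MvPolynomial.X b +
  MvPolynomial.C (eps k Ω b c) * MvPolynomial.X b * MvPolynomial.X c +
  MvPolynomial.C (eps k Ω c a) * MvPolynomial.X c * MvPolynomial.X a

/-- The ideal generated by the `ρ_{abc}` for `a, b, c` distinct. -/
noncomputable def rhoIdeal (k : ℕ) (Ω : Matrix (Fin (k + 2)) (Fin k) ℤ) :
    Ideal (MvPolynomial (Fin (k + 2)) ℤ) :=
  Ideal.span {g | ∃ a b c : Fin (k + 2), a ≠ b ∧ b ≠ c ∧ a ≠ c ∧ g = rho k Ω a b c}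

/-!
Up to the signs in `ε`, the vectors `q ↦ Δ_{pq}` lie in the left kernel of `Ω` (Laplace expansion
of a matrix with a repeated column), and a left kernel vector vanishing at two rows `q, r` is zero
because `Δ_{qr} ≠ 0`. A suitable combination of three of them gives the three-term Plücker relation
`Δ'_{qr} Δ'_{ps} + Δ'_{rp} Δ'_{qs} + Δ'_{pq} Δ'_{rs} = 0` for the signed minors `Δ'`. Three nonzero
integers with zero sum cannot all have the same sign, so the pairwise products of their signs add
up to `-1`; this relation among the `ε`'s, together with `ε² = 1`, is exactly what the polynomial
identity needs.
-/

open Matrix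

theorem Matrix.vecMul_signedMinors_eq_zero {R : Type*} [CommRing R] {n : ℕ}
    (M : Matrix (Fin (n + 1)) (Fin n) R) :
    (fun j : Fin (n + 1) => (-1) ^ (j : ℕ) * (M.submatrix j.succAbove id).det) ᵥ* M = 0 := by
  funext i
  let N : Matrix (Fin (n + 1)) (Fin (n + 1)) R := of fun j => Fin.cons (M j i) (M j)
  have hN : N.det = 0 := det_zero_of_column_eq (Fin.succ_ne_zero i).symm fun j => by simp [N]
  rw [det_succ_column_zero] at hN
  simpa [N, vecMul, dotProduct, submatrix, mul_comm, mul_left_comm, mul_assoc] using hN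

theorem Int.sign_mul_sign_add_eq_neg_one {a b c : ℤ} (ha : a ≠ 0) (hb : b ≠ 0) (hc : c ≠ 0)
    (h : a + b + c = 0) : a.sign * b.sign + b.sign * c.sign + c.sign * a.sign = -1 := by
  rcases ha.lt_or_gt with ha | ha <;> rcases hb.lt_or_gt with hb | hb <;>
    rcases hc.lt_or_gt with hc | hc <;>
    simp [Int.sign_eq_neg_one_of_neg, Int.sign_eq_one_of_pos, *] <;> omega

theorem neg_one_pow_mul_sign_sub_succAbove {n : ℕ} (p : Fin (n + 1)) (j : Fin n) :
    (-1 : ℤ) ^ ((p : ℕ) + (p.succAbove j : ℕ)) * Int.sign ((p : ℤ) - (p.succAbove j : ℕ))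
      = (-1) ^ ((p : ℕ) + (j : ℕ)) := by
  rcases lt_or_ge j.castSucc p with h | h
  · rw [Fin.succAbove_of_castSucc_lt p j h,
      Int.sign_eq_one_of_pos (by simp [Fin.lt_def] at h ⊢; omega)]
    simp
  · rw [Fin.succAbove_of_le_castSucc p j h,
      Int.sign_eq_neg_one_of_neg (by simp [Fin.le_def] at h ⊢; omega)]
    simp [← add_assoc, pow_succ]

section

variable {k : ℕ} (Ω : Matrix (Fin (k + 2)) (Fin k) ℤ)

theorem Delta_succAbove (p : Fin (k + 2)) (j : Fin (k + 1)) :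
    Delta k Ω p (p.succAbove j) = ((Ω.submatrix p.succAbove id).submatrix j.succAbove id).det := by
  have hcard : ({p, p.succAbove j}ᶜ : Finset (Fin (k + 2))).card = k := by
    rw [card_compl, card_pair (Fin.succAbove_ne p j).symm]; simp
  have hemb : ({p, p.succAbove j}ᶜ : Finset (Fin (k + 2))).orderEmbOfFin hcard
      = fun a => p.succAbove (j.succAbove a) := by
    refine (orderEmbOfFin_unique hcard (fun a => ?_) ((Fin.strictMono_succAbove p).comp
      (Fin.strictMono_succAbove j))).symm
    simp [Fin.succAbove_ne, (Fin.succAbove_right_injective (p := p)).ne (Fin.succAbove_ne j a)]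
  rw [Delta, minorDet, dif_pos hcard, hemb]
  rfl

noncomputable def signedDelta (p q : Fin (k + 2)) : ℤ :=
  (-1) ^ ((p : ℕ) + (q : ℕ)) * Int.sign ((p : ℤ) - (q : ℤ)) * Delta k Ω p q

@[simp]
theorem signedDelta_self (p : Fin (k + 2)) : signedDelta Ω p p = 0 := by
  simp [signedDelta]

theorem signedDelta_swap (p q : Fin (k + 2)) : signedDelta Ω q p = -signedDelta Ω p q := by
  rw [signedDelta, signedDelta, Delta_symm, ← neg_sub, Int.sign_neg, add_comm (q : ℕ)]
  ring

theorem signedDelta_ne_zero {p q : Fin (k + 2)} (hpq : p ≠ q) (hΔ : Delta k Ω p q ≠ 0) :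
    signedDelta Ω p q ≠ 0 := by
  have : (p : ℤ) - q ≠ 0 := sub_ne_zero.mpr (by exact_mod_cast Fin.val_ne_of_ne hpq)
  simp [signedDelta, this, hΔ]

theorem eps_eq_sign_signedDelta (p q : Fin (k + 2)) : eps k Ω p q = (signedDelta Ω p q).sign := by
  rcases neg_one_pow_eq_or ℤ ((p : ℕ) + (q : ℕ)) with h | h <;>
    simp [eps, signedDelta, Int.sign_mul, h]

theorem eps_swap (p q : Fin (k + 2)) : eps k Ω q p = -eps k Ω p q := by
  rw [eps_eq_sign_signedDelta, eps_eq_sign_signedDelta, signedDelta_swap, Int.sign_neg]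

theorem eps_mul_self {p q : Fin (k + 2)} (hpq : p ≠ q) (hΔ : Delta k Ω p q ≠ 0) :
    eps k Ω p q * eps k Ω p q = 1 := by
  rw [eps_eq_sign_signedDelta, ← Int.sign_mul, Int.sign_eq_one_of_pos]
  exact mul_self_pos.mpr (signedDelta_ne_zero Ω hpq hΔ)

/-- `signedDelta Ω p` is `(-1)^p` times the vector of alternating maximal minors of `Ω` with row
`p` deleted. -/
theorem signedDelta_vecMul (p : Fin (k + 2)) : signedDelta Ω p ᵥ* Ω = 0 := by
  have hrow : ∀ j, signedDelta Ω p (p.succAbove j) = (-1) ^ (p : ℕ) *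
      ((-1) ^ (j : ℕ) * ((Ω.submatrix p.succAbove id).submatrix j.succAbove id).det) := by
    intro j
    rw [signedDelta, neg_one_pow_mul_sign_sub_succAbove, Delta_succAbove, pow_add, mul_assoc]
  have h := congrArg ((-1) ^ (p : ℕ) • ·) (vecMul_signedMinors_eq_zero (Ω.submatrix p.succAbove id))
  funext i
  simpa [vecMul, dotProduct, Fin.sum_univ_succAbove _ p, hrow, Finset.mul_sum, mul_assoc] using
    congrFun h i

end

section

variable {k : ℕ} {Ω : Matrix (Fin (k + 2)) (Fin k) ℤ}

theorem eq_zero_of_vecMul_eq_zero_of_Delta_ne_zero {q r : Fin (k + 2)} (hqr : q ≠ r)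
    (hΔ : Delta k Ω q r ≠ 0) {x : Fin (k + 2) → ℤ} (hx : x ᵥ* Ω = 0) (hq : x q = 0)
    (hr : x r = 0) : x = 0 := by
  obtain ⟨j, rfl⟩ := Fin.exists_succAbove_eq hqr.symm
  rw [Delta_succAbove] at hΔ
  have hrest : (fun a => x (q.succAbove (j.succAbove a))) = 0 := by
    refine eq_zero_of_vecMul_eq_zero hΔ (funext fun i => ?_)
    simpa [vecMul, dotProduct, Fin.sum_univ_succAbove _ q, Fin.sum_univ_succAbove _ j, hq, hr]
      using congrFun hx i
  funext t
  rcases eq_or_ne t q with rfl | htq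
  · exact hq
  obtain ⟨j', rfl⟩ := Fin.exists_succAbove_eq htq
  rcases eq_or_ne j' j with rfl | hj
  · exact hr
  obtain ⟨a, rfl⟩ := Fin.exists_succAbove_eq hj
  exact congrFun hrest a

theorem signedDelta_pluecker {q r : Fin (k + 2)} (hqr : q ≠ r) (hΔ : Delta k Ω q r ≠ 0)
    (p s : Fin (k + 2)) :
    signedDelta Ω q r * signedDelta Ω p s + signedDelta Ω r p * signedDelta Ω q s +
      signedDelta Ω p q * signedDelta Ω r s = 0 := by
  let x := signedDelta Ω q r • signedDelta Ω p + signedDelta Ω r p • signedDelta Ω q +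
    signedDelta Ω p q • signedDelta Ω r
  have hx : x ᵥ* Ω = 0 := by
    simp only [x, add_vecMul, smul_vecMul, signedDelta_vecMul, smul_zero, add_zero]
  have hxq : x q = 0 := by
    simp [x, signedDelta_swap Ω q r]; ring
  have hxr : x r = 0 := by
    simp [x, signedDelta_swap Ω p r]; ring
  simpa [x] using congrFun (eq_zero_of_vecMul_eq_zero_of_Delta_ne_zero hqr hΔ hx hxq hxr) s

theorem eps_pluecker (hΔ : ∀ p q : Fin (k + 2), p ≠ q → Delta k Ω p q ≠ 0) {p q r s : Fin (k + 2)}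
    (hpq : p ≠ q) (hpr : p ≠ r) (hps : p ≠ s) (hqr : q ≠ r) (hqs : q ≠ s) (hrs : r ≠ s) :
    eps k Ω q r * eps k Ω p s * (eps k Ω r p * eps k Ω q s) +
      eps k Ω r p * eps k Ω q s * (eps k Ω p q * eps k Ω r s) +
      eps k Ω p q * eps k Ω r s * (eps k Ω q r * eps k Ω p s) = -1 := by
  have ne (a b : Fin (k + 2)) (h : a ≠ b) := signedDelta_ne_zero Ω h (hΔ a b h)
  simpa only [eps_eq_sign_signedDelta, Int.sign_mul] using
    Int.sign_mul_sign_add_eq_neg_one (mul_ne_zero (ne q r hqr) (ne p s hps))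
      (mul_ne_zero (ne r p hpr.symm) (ne q s hqs)) (mul_ne_zero (ne p q hpq) (ne r s hrs))
      (signedDelta_pluecker hqr (hΔ q r hqr) p s)

end

theorem combination_eq_neg_of_mul_self_eq_one {R : Type*} [CommRing R] {a b c d e f : R}
    (ha : a * a = 1) (hb : b * b = 1) (hc : c * c = 1) (hd : d * d = 1) (he : e * e = 1)
    (hf : f * f = 1) (h : b * d * (c * e) + c * e * (a * f) + a * f * (b * d) = -1)
    (xp xq xr xs : R) :
    a * b * c *
      (e * f * (xp * (b * xq * xr + f * xr * xs + -e * xs * xq)) +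
        f * d * (xq * (c * xr * xp + d * xp * xs + -f * xs * xr)) +
        d * e * (xr * (a * xp * xq + e * xq * xs + -d * xs * xp))) = -(xp * xq * xr) := by
  linear_combination xp * xq * xr * (h + a * c * e * f * hb + a * b * d * f * hc +
      b * c * d * e * ha) +
    a * b * c * (e * xp * xr * xs * (hf - hd) + f * xp * xq * xs * (hd - he) +
      d * xq * xr * xs * (he - hf))

theorem rho_combination_eq_neg_monomial_general (k : ℕ)
    (Ω : Matrix (Fin (k + 2)) (Fin k) ℤ) (hΩ : CondStar k Ω) (p q r s : Fin (k + 2))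
    (hpq : p ≠ q) (hpr : p ≠ r) (hps : p ≠ s) (hqr : q ≠ r) (hqs : q ≠ s) (hrs : r ≠ s) :
    MvPolynomial.C (eps k Ω p q * eps k Ω q r * eps k Ω r p) *
      (MvPolynomial.C (eps k Ω q s * eps k Ω r s) * (MvPolynomial.X p * rho k Ω q r s) +
       MvPolynomial.C (eps k Ω r s * eps k Ω p s) * (MvPolynomial.X q * rho k Ω r p s) +
       MvPolynomial.C (eps k Ω p s * eps k Ω q s) * (MvPolynomial.X r * rho k Ω p q s)) =
      - (MvPolynomial.X p * MvPolynomial.X q * MvPolynomial.X r) := by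
  obtain ⟨hΔ, -⟩ := hΩ
  have hsq {a b : Fin (k + 2)} (h : a ≠ b) :
      (MvPolynomial.C (eps k Ω a b) : MvPolynomial (Fin (k + 2)) ℤ) *
        MvPolynomial.C (eps k Ω a b) = 1 := by
    rw [← map_mul, eps_mul_self Ω h (hΔ a b h), map_one]
  have hpl := congrArg (MvPolynomial.C : ℤ → MvPolynomial (Fin (k + 2)) ℤ)
    (eps_pluecker hΔ hpq hpr hps hqr hqs hrs)
  simp only [map_add, map_mul, map_neg, map_one] at hpl
  simp only [rho, eps_swap Ω _ s, map_mul, map_neg]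
  exact combination_eq_neg_of_mul_self_eq_one (hsq hpq) (hsq hqr) (hsq hpr.symm) (hsq hps)
    (hsq hqs) (hsq hrs) hpl _ _ _ _

/-- The identity
`Or_{pqr}(ε^q_s ε^r_s u_p ρ_{qrs} + ε^r_s ε^p_s u_q ρ_{rps} + ε^p_s ε^q_s u_r ρ_{pqs})
  = - u_p u_q u_r`. -/
theorem rho_combination_eq_neg_monomial (k : ℕ) (hk : 2 ≤ k)
    (Ω : Matrix (Fin (k + 2)) (Fin k) ℤ) (hΩ : CondStar k Ω) (p q r s : Fin (k + 2))
    (hpq : p ≠ q) (hpr : p ≠ r) (hps : p ≠ s) (hqr : q ≠ r) (hqs : q ≠ s) (hrs : r ≠ s) :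
    MvPolynomial.C (eps k Ω p q * eps k Ω q r * eps k Ω r p) *
      (MvPolynomial.C (eps k Ω q s * eps k Ω r s) * (MvPolynomial.X p * rho k Ω q r s) +
       MvPolynomial.C (eps k Ω r s * eps k Ω p s) * (MvPolynomial.X q * rho k Ω r p s) +
       MvPolynomial.C (eps k Ω p s * eps k Ω q s) * (MvPolynomial.X r * rho k Ω p q s)) =
      - (MvPolynomial.X p * MvPolynomial.X q * MvPolynomial.X r) :=
  rho_combination_eq_neg_monomial_general k Ω hΩ p q r s hpq hpr hps hqr hqs hrs
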